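/- The Frattini subgroup of H_{p,t,s} equals ⟨a^p, b^p, c⟩ and is contained in the center of H_{p,t,s}. -/

import Mathlib

open scoped commutatorElement

/-- Relations for the inner-abelian non-metacyclic p-group
`H_{p,t,s} = ⟨a, b, c | a^(p^t) = b^(p^s) = c^p = 1, [a,b] = c, [c,a] = [c,b] = 1⟩`. -/
def HRels (p t s : ℕ) : Set (FreeGroup (Fin 3)) :=
  {FreeGroup.of (0 : Fin 3) ^ p ^ t, FreeGroup.of (1 : Fin 3) ^ p ^ s, FreeGroup.of (2 : Fin 3) ^ p,
   ⁅FreeGroup.of (0 : Fin 3), FreeGroup.of (1 : Fin 3)⁆ * (FreeGroup.of (2 : Fin 3))⁻¹,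
   ⁅FreeGroup.of (2 : Fin 3), FreeGroup.of (0 : Fin 3)⁆, ⁅FreeGroup.of (2 : Fin 3), FreeGroup.of (1 : Fin 3)⁆}

/-- The group `H_{p,t,s}` as a presented group. -/
abbrev Hgrp (p t s : ℕ) := PresentedGroup (HRels p t s)

/-- The generator `a` of `H_{p,t,s}`. -/
def aa (p t s : ℕ) : Hgrp p t s := PresentedGroup.of (0 : Fin 3)

/-- The generator `b` of `H_{p,t,s}`. -/
def bb (p t s : ℕ) : Hgrp p t s := PresentedGroup.of (1 : Fin 3)

/-- The generator `c = [a,b]` of `H_{p,t,s}`. -/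
def cc (p t s : ℕ) : Hgrp p t s := PresentedGroup.of (2 : Fin 3)

/-!
`N = ⟨a^p, b^p, c⟩` is central: `c = [a, b]` commutes with `a` and `b`, so conjugation by `b` sends
`a^p` to `c^{-p} a^p = a^p`, and symmetrically for `b^p`. Every maximal subgroup `M` contains `N`:
if a central element `z` lies outside `M`, then `G = M⟨z⟩`. For `z = c` this writes `a`, `b` as
elements of `M` times central elements, so `c = [a, b] ∈ M` anyway; for `z = x^p` it gives
`x^{1-pk} ∈ M`, and `1 - pk` is prime to the `p`-power order of `x`, so `x ∈ M`. Conversely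
`a` and `b` commute modulo `N`, so every element is `a^i b^j n` with `n ∈ N`; the two maps onto
`ℤ/p` sending `(a, b)` to `(1, 0)` and `(0, 1)` have maximal kernels, which forces `p ∣ i, j`.
-/

namespace Subgroup

variable {G : Type*} [Group G]

theorem normal_of_le_center {H : Subgroup G} (h : H ≤ center G) : H.Normal :=
  ⟨fun n hn g => by rw [mem_center_iff.mp (h hn) g, mul_inv_cancel_right]; exact hn⟩

theorem exists_zpow_mul_zpow_eq_of_mem_closure_pair {x y g : G} (hxy : Commute x y)
    (hg : g ∈ closure {x, y}) : ∃ i j : ℤ, x ^ i * y ^ j = g := by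
  induction hg using closure_induction with
  | mem g hg =>
    rcases hg with rfl | rfl
    exacts [⟨1, 0, by simp⟩, ⟨0, 1, by simp⟩]
  | one => exact ⟨0, 0, by simp⟩
  | mul g h _ _ ihg ihh =>
    obtain ⟨i, j, rfl⟩ := ihg
    obtain ⟨k, l, rfl⟩ := ihh
    refine ⟨i + k, j + l, ?_⟩
    calc x ^ (i + k) * y ^ (j + l) = x ^ i * (x ^ k * y ^ j) * y ^ l := by group
      _ = x ^ i * y ^ j * (x ^ k * y ^ l) := by rw [(hxy.zpow_zpow k j).eq]; group
  | inv g _ ih =>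
    obtain ⟨i, j, rfl⟩ := ih
    exact ⟨-i, -j, by rw [mul_inv_rev, (hxy.zpow_zpow (-i) (-j)).eq]; group⟩

theorem commutatorElement_mul_mem_center_left {x y z : G} (hz : z ∈ center G) :
    ⁅x * z, y⁆ = ⁅x, y⁆ :=
  calc ⁅x * z, y⁆ = x * (z * y) * z⁻¹ * x⁻¹ * y⁻¹ := by rw [commutatorElement_def]; group
    _ = ⁅x, y⁆ := by rw [← mem_center_iff.mp hz y, commutatorElement_def]; group

theorem commutatorElement_mul_mem_center {x y z w : G} (hz : z ∈ center G) (hw : w ∈ center G) :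
    ⁅x * z, y * w⁆ = ⁅x, y⁆ := by
  rw [commutatorElement_mul_mem_center_left hz, ← commutatorElement_inv,
    commutatorElement_mul_mem_center_left hw, commutatorElement_inv]

theorem commutatorElement_mem {H : Subgroup G} {x y : G} (hx : x ∈ H) (hy : y ∈ H) :
    ⁅x, y⁆ ∈ H := by
  rw [commutatorElement_def]
  exact H.mul_mem (H.mul_mem (H.mul_mem hx hy) (H.inv_mem hx)) (H.inv_mem hy)

theorem zpow_mem_of_dvd {H : Subgroup G} {x : G} {n : ℕ} {i : ℤ}
    (hx : x ^ n ∈ H) (hi : (n : ℤ) ∣ i) : x ^ i ∈ H := by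
  obtain ⟨k, rfl⟩ := hi
  rw [zpow_mul, zpow_natCast]
  exact H.zpow_mem hx k

variable {M : Subgroup G}

theorem exists_mul_eq_of_isCoatom {Z : Subgroup G} (hM : IsCoatom M) (hZ : Z ≤ center G)
    (hZM : ¬ Z ≤ M) (g : G) : ∃ m ∈ M, ∃ z ∈ Z, m * z = g := by
  have : Z.Normal := normal_of_le_center hZ
  have hsup : M ⊔ Z = ⊤ := hM.2 _ (left_lt_sup.mpr hZM)
  exact mem_sup_of_normal_right.mp (hsup ▸ mem_top g)

theorem commutatorElement_mem_of_isCoatom (hM : IsCoatom M) {x y : G} (hxy : ⁅x, y⁆ ∈ center G) :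
    ⁅x, y⁆ ∈ M := by
  by_contra hxyM
  have hZM : ¬ center G ≤ M := fun h => hxyM (h hxy)
  obtain ⟨m, hm, z, hz, rfl⟩ := exists_mul_eq_of_isCoatom hM le_rfl hZM x
  obtain ⟨n, hn, w, hw, rfl⟩ := exists_mul_eq_of_isCoatom hM le_rfl hZM y
  rw [commutatorElement_mul_mem_center hz hw] at hxyM
  exact hxyM (commutatorElement_mem hm hn)

theorem pow_mem_of_isCoatom (hM : IsCoatom M) {x : G} {p e : ℕ} (hx : x ^ p ^ e = 1)
    (hxp : x ^ p ∈ center G) : x ^ p ∈ M := by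
  by_contra hxpM
  have hZM : ¬ zpowers (x ^ p) ≤ M := fun h => hxpM (h (mem_zpowers _))
  obtain ⟨m, hm, _, ⟨k, rfl⟩, hmk⟩ :=
    exists_mul_eq_of_isCoatom hM (zpowers_le.mpr hxp) hZM x
  have hxm : x ^ (1 - (p : ℤ) * k) ∈ M := by
    rwa [show x ^ (1 - (p : ℤ) * k) = m by rw [eq_mul_inv_of_mul_eq hmk]; group]
  obtain ⟨u, v, huv⟩ : IsCoprime (1 - (p : ℤ) * k) ((p : ℤ) ^ e) :=
    IsCoprime.pow_right ⟨1, k, by ring⟩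
  have hxM : x ∈ M := by
    have hxu : x = (x ^ (1 - (p : ℤ) * k)) ^ u :=
      calc x = x ^ ((1 - (p : ℤ) * k) * u + ((p ^ e : ℕ) : ℤ) * v) := by
            rw [show (1 - (p : ℤ) * k) * u + ((p ^ e : ℕ) : ℤ) * v = 1 by
              push_cast; linear_combination huv, zpow_one]
        _ = (x ^ (1 - (p : ℤ) * k)) ^ u := by
            rw [zpow_add, zpow_mul, zpow_mul, zpow_natCast, hx, one_zpow, mul_one]
    rw [hxu]
    exact M.zpow_mem hxm u
  exact hxpM (M.pow_mem hxM p)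

end Subgroup

section

variable {G : Type*} [Group G]

theorem commute_pow_of_conj_eq {x y z : G} (h : x * y * x⁻¹ = z * y) (hzy : Commute z y)
    {n : ℕ} (hz : z ^ n = 1) : Commute x (y ^ n) := by
  rw [commute_iff_eq, ← mul_inv_eq_iff_eq_mul, ← conj_pow, h, hzy.mul_pow, hz, one_mul]

theorem MonoidHom.isCoatom_ker {H : Type*} [CommGroup H] [IsSimpleGroup H] (φ : G →* H) {g : G}
    (hg : φ g ≠ 1) : IsCoatom φ.ker := by
  have hsurj : Function.Surjective φ := MonoidHom.range_eq_top.mp <|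
    (Subgroup.Normal.eq_bot_or_eq_top inferInstance).resolve_left fun h =>
      hg (Subgroup.mem_bot.mp (h ▸ MonoidHom.mem_range.mpr ⟨g, rfl⟩))
  rw [← MonoidHom.comap_bot]
  exact Subgroup.isCoatom_comap_of_surjective hsurj isCoatom_bot

theorem le_frattini_iff {H : Subgroup G} :
    H ≤ frattini G ↔ ∀ M : Subgroup G, IsCoatom M → H ≤ M :=
  le_iInf₂_iff

theorem frattini_le_ker {H : Type*} [CommGroup H] [IsSimpleGroup H] (φ : G →* H) :
    frattini G ≤ φ.ker := fun g hg => by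
  by_contra h
  exact h (frattini_le_coatom (φ.isCoatom_ker h) hg)

end

instance ZMod.isSimpleGroup_multiplicative (p : ℕ) [Fact p.Prime] :
    IsSimpleGroup (Multiplicative (ZMod p)) :=
  isSimpleGroup_of_prime_card ((Nat.card_congr Multiplicative.toAdd).trans (Nat.card_zmod p))

theorem PresentedGroup.mem_center_of_forall_commute {α : Type*} {rels : Set (FreeGroup α)}
    {g : PresentedGroup rels} (h : ∀ i, Commute (of i) g) : g ∈ Subgroup.center _ :=
  Subgroup.mem_center_iff.mpr fun y => Subgroup.mem_centralizer_singleton_iff.mp <|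
    generated_by rels _ (fun i => Subgroup.mem_centralizer_singleton_iff.mpr (h i).eq) y

namespace Hgrp

variable {p t s : ℕ}

theorem aa_pow_pow_eq_one : aa p t s ^ p ^ t = 1 :=
  (map_pow (PresentedGroup.mk _) _ _).symm.trans (PresentedGroup.one_of_mem (by simp [HRels]))

theorem bb_pow_pow_eq_one : bb p t s ^ p ^ s = 1 :=
  (map_pow (PresentedGroup.mk _) _ _).symm.trans (PresentedGroup.one_of_mem (by simp [HRels]))

theorem cc_pow_eq_one : cc p t s ^ p = 1 :=
  (map_pow (PresentedGroup.mk _) _ _).symm.trans (PresentedGroup.one_of_mem (by simp [HRels]))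

theorem commutatorElement_aa_bb : ⁅aa p t s, bb p t s⁆ = cc p t s :=
  mul_inv_eq_one.mp <| (PresentedGroup.one_of_mem (rels := HRels p t s)
    (x := ⁅FreeGroup.of (0 : Fin 3), FreeGroup.of (1 : Fin 3)⁆ * (FreeGroup.of (2 : Fin 3))⁻¹)
    (by simp [HRels]))

theorem commute_cc_of (i : Fin 3) : Commute (cc p t s) (PresentedGroup.of i) := by
  fin_cases i
  · exact commutatorElement_eq_one_iff_commute.mp
      (PresentedGroup.one_of_mem (x := ⁅FreeGroup.of (2 : Fin 3), FreeGroup.of (0 : Fin 3)⁆)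
        (by simp [HRels]))
  · exact commutatorElement_eq_one_iff_commute.mp
      (PresentedGroup.one_of_mem (x := ⁅FreeGroup.of (2 : Fin 3), FreeGroup.of (1 : Fin 3)⁆)
        (by simp [HRels]))
  · exact Commute.refl _

theorem cc_mem_center : cc p t s ∈ Subgroup.center (Hgrp p t s) :=
  PresentedGroup.mem_center_of_forall_commute fun i => (commute_cc_of i).symm

theorem conj_aa_bb : aa p t s * bb p t s * (aa p t s)⁻¹ = cc p t s * bb p t s := by
  rw [← commutatorElement_aa_bb, commutatorElement_def]; group

theorem conj_bb_aa : bb p t s * aa p t s * (bb p t s)⁻¹ = (cc p t s)⁻¹ * aa p t s := by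
  rw [← commutatorElement_aa_bb, commutatorElement_def]; group

theorem aa_pow_mem_center : aa p t s ^ p ∈ Subgroup.center (Hgrp p t s) := by
  refine PresentedGroup.mem_center_of_forall_commute fun i => ?_
  fin_cases i
  · exact Commute.self_pow _ _
  · exact commute_pow_of_conj_eq conj_bb_aa (commute_cc_of 0).inv_left
      (by rw [inv_pow, cc_pow_eq_one, inv_one])
  · exact (commute_cc_of 0).pow_right p

theorem bb_pow_mem_center : bb p t s ^ p ∈ Subgroup.center (Hgrp p t s) := by
  refine PresentedGroup.mem_center_of_forall_commute fun i => ?_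
  fin_cases i
  · exact commute_pow_of_conj_eq conj_aa_bb (commute_cc_of 1) cc_pow_eq_one
  · exact Commute.self_pow _ _
  · exact (commute_cc_of 1).pow_right p

theorem closure_le_center :
    Subgroup.closure {aa p t s ^ p, bb p t s ^ p, cc p t s} ≤ Subgroup.center (Hgrp p t s) := by
  rw [Subgroup.closure_le]
  rintro _ (rfl | rfl | rfl)
  exacts [aa_pow_mem_center, bb_pow_mem_center, cc_mem_center]

theorem closure_le_frattini :
    Subgroup.closure {aa p t s ^ p, bb p t s ^ p, cc p t s} ≤ frattini (Hgrp p t s) := by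
  refine le_frattini_iff.mpr fun M hM => (Subgroup.closure_le M).mpr ?_
  rintro _ (rfl | rfl | rfl)
  · exact Subgroup.pow_mem_of_isCoatom hM aa_pow_pow_eq_one aa_pow_mem_center
  · exact Subgroup.pow_mem_of_isCoatom hM bb_pow_pow_eq_one bb_pow_mem_center
  · rw [← commutatorElement_aa_bb]
    exact Subgroup.commutatorElement_mem_of_isCoatom hM (commutatorElement_aa_bb ▸ cc_mem_center)

theorem exists_zpow_mul_zpow_mul_eq (g : Hgrp p t s) :
    ∃ i j : ℤ, ∃ n ∈ Subgroup.closure {aa p t s ^ p, bb p t s ^ p, cc p t s},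
      aa p t s ^ i * bb p t s ^ j * n = g := by
  set N := Subgroup.closure {aa p t s ^ p, bb p t s ^ p, cc p t s}
  have : N.Normal := Subgroup.normal_of_le_center closure_le_center
  have hcc : (cc p t s : Hgrp p t s ⧸ N) = 1 :=
    (QuotientGroup.eq_one_iff _).mpr (Subgroup.subset_closure (by simp))
  have hcomm : Commute (aa p t s : Hgrp p t s ⧸ N) (bb p t s) := by
    have h := map_commutatorElement (QuotientGroup.mk' N) (aa p t s) (bb p t s)
    rw [QuotientGroup.mk'_apply, QuotientGroup.mk'_apply, QuotientGroup.mk'_apply,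
      commutatorElement_aa_bb, hcc] at h
    exact commutatorElement_eq_one_iff_commute.mp h.symm
  have hg : (g : Hgrp p t s ⧸ N) ∈
      Subgroup.closure {(aa p t s : Hgrp p t s ⧸ N), (bb p t s : Hgrp p t s ⧸ N)} := by
    refine PresentedGroup.generated_by _ ((Subgroup.closure _).comap (QuotientGroup.mk' N))
      (fun i => ?_) g
    fin_cases i
    · exact Subgroup.subset_closure (by simp [aa])
    · exact Subgroup.subset_closure (by simp [bb])
    · exact Subgroup.mem_comap.mpr (show (cc p t s : Hgrp p t s ⧸ N) ∈ _ from hcc ▸ one_mem _)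
  obtain ⟨i, j, hij⟩ := Subgroup.exists_zpow_mul_zpow_eq_of_mem_closure_pair hcomm hg
  exact ⟨i, j, (aa p t s ^ i * bb p t s ^ j)⁻¹ * g, QuotientGroup.eq.mp (by simpa using hij),
    mul_inv_cancel_left _ _⟩

def toZMod (ht : t ≠ 0) (hs : s ≠ 0) (u v : ZMod p) : Hgrp p t s →* Multiplicative (ZMod p) :=
  PresentedGroup.toGroup (f := ![.ofAdd u, .ofAdd v, 1]) <| by
    rintro r (rfl | rfl | rfl | rfl | rfl | rfl) <;>
      simp [← ofAdd_nsmul, zero_pow ht, zero_pow hs, commutatorElement_eq_one_iff_mul_comm,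
        mul_comm]

variable {ht : t ≠ 0} {hs : s ≠ 0} {u v : ZMod p}

@[simp]
theorem toZMod_aa : toZMod ht hs u v (aa p t s) = .ofAdd u := PresentedGroup.toGroup.of _

@[simp]
theorem toZMod_bb : toZMod ht hs u v (bb p t s) = .ofAdd v := PresentedGroup.toGroup.of _

@[simp]
theorem toZMod_cc : toZMod ht hs u v (cc p t s) = 1 := PresentedGroup.toGroup.of _

theorem closure_le_ker_toZMod :
    Subgroup.closure {aa p t s ^ p, bb p t s ^ p, cc p t s} ≤ (toZMod ht hs u v).ker := by
  rw [Subgroup.closure_le]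
  rintro _ (rfl | rfl | rfl) <;> simp [← ofAdd_nsmul]

theorem toZMod_zpow_mul_zpow_mul {i j : ℤ} {n : Hgrp p t s}
    (hn : n ∈ Subgroup.closure {aa p t s ^ p, bb p t s ^ p, cc p t s}) :
    toZMod ht hs u v (aa p t s ^ i * bb p t s ^ j * n) = .ofAdd (i • u + j • v) := by
  rw [map_mul, map_mul, closure_le_ker_toZMod hn, mul_one, map_zpow, map_zpow, toZMod_aa,
    toZMod_bb, ofAdd_add, ofAdd_zsmul, ofAdd_zsmul]

theorem frattini_le_closure (hp : p.Prime) (ht : t ≠ 0) (hs : s ≠ 0) :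
    frattini (Hgrp p t s) ≤ Subgroup.closure {aa p t s ^ p, bb p t s ^ p, cc p t s} := by
  have : Fact p.Prime := ⟨hp⟩
  intro g hg
  obtain ⟨i, j, n, hn, rfl⟩ := exists_zpow_mul_zpow_mul_eq g
  have hi : (p : ℤ) ∣ i := by
    have h := frattini_le_ker (toZMod ht hs 1 0) hg
    rwa [MonoidHom.mem_ker, toZMod_zpow_mul_zpow_mul hn, ofAdd_eq_one, smul_zero, add_zero,
      zsmul_one, ZMod.intCast_zmod_eq_zero_iff_dvd] at h
  have hj : (p : ℤ) ∣ j := by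
    have h := frattini_le_ker (toZMod ht hs 0 1) hg
    rwa [MonoidHom.mem_ker, toZMod_zpow_mul_zpow_mul hn, ofAdd_eq_one, smul_zero, zero_add,
      zsmul_one, ZMod.intCast_zmod_eq_zero_iff_dvd] at h
  refine mul_mem (mul_mem ?_ ?_) hn
  · exact Subgroup.zpow_mem_of_dvd (Subgroup.subset_closure (by simp)) hi
  · exact Subgroup.zpow_mem_of_dvd (Subgroup.subset_closure (by simp)) hj

end Hgrp

theorem stmt8_general (p t s : ℕ) (hp : p.Prime) (hs : 1 ≤ s) (hts : s ≤ t) :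
    frattini (Hgrp p t s) = Subgroup.closure {aa p t s ^ p, bb p t s ^ p, cc p t s} ∧
    frattini (Hgrp p t s) ≤ Subgroup.center (Hgrp p t s) := by
  have hΦ : frattini (Hgrp p t s) = Subgroup.closure {aa p t s ^ p, bb p t s ^ p, cc p t s} :=
    le_antisymm (Hgrp.frattini_le_closure hp (by omega) (by omega)) Hgrp.closure_le_frattini
  exact ⟨hΦ, hΦ ▸ Hgrp.closure_le_center⟩

theorem stmt8 (p t s : ℕ) (hp : p.Prime) (hodd : Odd p) (hs : 1 ≤ s) (hts : s ≤ t) :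
    frattini (Hgrp p t s) = Subgroup.closure {aa p t s ^ p, bb p t s ^ p, cc p t s} ∧
    frattini (Hgrp p t s) ≤ Subgroup.center (Hgrp p t s) :=
  stmt8_general p t s hp hs hts
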